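/- arXiv:1902.01303 — 2 statements merged into one kernel-verified Lean document; each statement's English description precedes it below -/
import Mathlib

section
/- For every α > 0, d ≥ 2 and p ∈ {1,…,d−1} there exist δ > 0 and b > 0 with the following property. For every g ∈ GL(d,ℝ), every p-dimensional subspace P and (d−p)-dimensional subspace Q of ℝ^d with min{∠(P,Q), ∠(gP,gQ)} ≥ α, and every pair of p-dimensional subspaces P₁, P₂ with Pᵢ ∩ Q = {0} and d(g·Pᵢ, g·P) < δ (i = 1,2), one has d(g·P₁, g·P₂) ≥ b·(m(g|_Q)/‖g|_P‖)·d(P₁,P₂). -/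
/-!
Split `ℝ^d = P ⊕ Q`. Since `∠(P,Q) ≥ α`, both components of `x + y` (`x ∈ P`, `y ∈ Q`) have
norm at most `‖x + y‖ / sin α`, and the same holds for `gP ⊕ gQ`. If `g·Pᵢ` lies within
`sin α / 2` of `g·P`, every vector of `g·Pᵢ` has a `gQ`-component shorter than its
`gP`-component. Now write `v ∈ P₁` as `u + q₁` and choose `q₂ ∈ Q` with `u + q₂ ∈ P₂`.
In the source, `sin α · ‖u‖ · d(v, P₂) ≤ ‖q₁ - q₂‖`; in the target, comparing `g v` with
any vector of `g·P₂` through the previous facts gives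
`(sin α / 4) · ‖g(q₁ - q₂)‖ ≤ d(g·P₁, g·P₂) · ‖g u‖`. Bounding `‖g(q₁ - q₂)‖` below by
`m(g|_Q) ‖q₁ - q₂‖` and `‖g u‖` above by `‖g|_P‖ ‖u‖` gives the claim with
`δ = sin β / 2` and `b = sin² β / 4`, where `β = min α (π / 2)`.
-/

noncomputable section

open scoped Matrix RealInnerProductSpace
open Filter Topology

namespace Paper

abbrev Euc (d : ℕ) : Type := EuclideanSpace ℝ (Fin d)

/-- The action of a `d × d` real matrix on Euclidean space. -/
def act {d : ℕ} (g : Matrix (Fin d) (Fin d) ℝ) (v : Euc d) : Euc d :=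
  Matrix.toEuclideanCLM (𝕜 := ℝ) g v

/-- The operator norm of a matrix acting on Euclidean space. -/
def opNorm {d : ℕ} (g : Matrix (Fin d) (Fin d) ℝ) : ℝ :=
  ‖(Matrix.toEuclideanCLM (𝕜 := ℝ) g : Euc d →L[ℝ] Euc d)‖

/-- The underlying matrix of an element of `GL (Fin d) ℝ`. -/
def mat {d : ℕ} (g : GL (Fin d) ℝ) : Matrix (Fin d) (Fin d) ℝ := ↑g

/-- The `p`-th singular value (`1`-indexed), via the min-max characterization:
`σ_p(g)` is the largest, over `p`-dimensional subspaces `P`, of the minimal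
stretch of unit vectors of `P`. -/
def sv {d : ℕ} (g : Matrix (Fin d) (Fin d) ℝ) (p : ℕ) : ℝ :=
  sSup { r | ∃ P : Submodule ℝ (Euc d), Module.finrank ℝ P = p ∧
      r = sInf { t | ∃ v ∈ P, ‖v‖ = 1 ∧ t = ‖act g v‖ } }

/-- `g` has a gap of index `p` if `σ_p(g) > σ_{p+1}(g)`. -/
def HasGap {d : ℕ} (g : Matrix (Fin d) (Fin d) ℝ) (p : ℕ) : Prop :=
  sv g (p + 1) < sv g p

/-- `U` is a Cartan attractor of index `p` for `g`: for some singular value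
decomposition `g = k·a·l` (`k`, `l` orthogonal, `a` diagonal with decreasing
nonnegative entries), `U` is the span of the first `p` columns of `k`. -/
def IsCartanAttractor {d : ℕ} (g : Matrix (Fin d) (Fin d) ℝ) (p : ℕ)
    (U : Submodule ℝ (Euc d)) : Prop :=
  ∃ k l : Matrix (Fin d) (Fin d) ℝ, ∃ σ : Fin d → ℝ,
    k ∈ Matrix.unitaryGroup (Fin d) ℝ ∧ l ∈ Matrix.unitaryGroup (Fin d) ℝ ∧
    (∀ i j : Fin d, i ≤ j → σ j ≤ σ i) ∧ (∀ i, 0 ≤ σ i) ∧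
    g = k * Matrix.diagonal σ * l ∧
    U = Submodule.span ℝ { x : Euc d | ∃ i : Fin d, (i : ℕ) < p ∧
          x = (EuclideanSpace.equiv (Fin d) ℝ).symm (fun j => k j i) }

/-- The Cartan attractor `U_p(g)`; when `g` has a gap of index `p` it is the
unique subspace satisfying `IsCartanAttractor g p`. -/
def cartanAttractor {d : ℕ} (g : Matrix (Fin d) (Fin d) ℝ) (p : ℕ) :
    Submodule ℝ (Euc d) :=
  letI := Classical.propDecidable (∃ U, IsCartanAttractor g p U)
  if h : ∃ U, IsCartanAttractor g p U then h.choose else ⊥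

/-- The angle `∠(P,Q)` between two subspaces: the infimum of angles between
nonzero vectors of `P` and `Q`. -/
def subAngle {d : ℕ} (P Q : Submodule ℝ (Euc d)) : ℝ :=
  sInf { θ | ∃ v ∈ P, v ≠ 0 ∧ ∃ w ∈ Q, w ≠ 0 ∧ θ = InnerProductGeometry.angle v w }

/-- `sin ∠(v,w)`. -/
def sinAngle {d : ℕ} (v w : Euc d) : ℝ := Real.sin (InnerProductGeometry.angle v w)

/-- The distance `d(P,Q) = max_{v ∈ P∖{0}} min_{w ∈ Q∖{0}} sin ∠(v,w)`. -/
def grassDist {d : ℕ} (P Q : Submodule ℝ (Euc d)) : ℝ :=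
  sSup { r | ∃ v ∈ P, v ≠ 0 ∧
      r = sInf { s | ∃ w ∈ Q, w ≠ 0 ∧ s = sinAngle v w } }

/-- The image `g·P` of a subspace under a matrix. -/
def mapMat {d : ℕ} (g : Matrix (Fin d) (Fin d) ℝ) (P : Submodule ℝ (Euc d)) :
    Submodule ℝ (Euc d) :=
  P.map ((Matrix.toEuclideanCLM (𝕜 := ℝ) g : Euc d →L[ℝ] Euc d) : Euc d →ₗ[ℝ] Euc d)

/-- `m(g|_W)`, the minimal stretch of unit vectors of `W` under `g`. -/
def minRestrict {d : ℕ} (g : Matrix (Fin d) (Fin d) ℝ) (W : Submodule ℝ (Euc d)) : ℝ :=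
  sInf { t | ∃ v ∈ W, ‖v‖ = 1 ∧ t = ‖act g v‖ }

/-- `‖g|_W‖`, the maximal stretch of unit vectors of `W` under `g`. -/
def normRestrict {d : ℕ} (g : Matrix (Fin d) (Fin d) ℝ) (W : Submodule ℝ (Euc d)) : ℝ :=
  sSup { t | ∃ v ∈ W, ‖v‖ = 1 ∧ t = ‖act g v‖ }

open InnerProductGeometry

section

variable {d : ℕ}

theorem sin_le_sin_of_le_of_le_pi_sub {α θ : ℝ} (hα : 0 ≤ α) (h₁ : α ≤ θ)
    (h₂ : θ ≤ Real.pi - α) : Real.sin α ≤ Real.sin θ := by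
  rcases le_total θ (Real.pi / 2) with hθ | hθ
  · exact Real.sin_le_sin_of_le_of_le_pi_div_two (by linarith [Real.pi_pos]) hθ h₁
  · rw [← Real.sin_pi_sub θ]
    exact Real.sin_le_sin_of_le_of_le_pi_div_two (by linarith [Real.pi_pos]) (by linarith)
      (by linarith)

theorem sinAngle_nonneg (v w : Euc d) : 0 ≤ sinAngle v w :=
  Real.sin_nonneg_of_nonneg_of_le_pi (angle_nonneg v w) (angle_le_pi v w)

theorem sq_sinAngle_mul_norm_mul_sq_norm (v w : Euc d) :
    (sinAngle v w * ‖v‖) ^ 2 * ‖w‖ ^ 2 = ‖v‖ ^ 2 * ‖w‖ ^ 2 - ⟪v, w⟫ ^ 2 := by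
  rw [sinAngle, ← cos_angle_mul_norm_mul_norm v w]
  linear_combination (‖v‖ * ‖w‖) ^ 2 * Real.sin_sq_add_cos_sq (angle v w)

theorem norm_sub_smul_sq (v w : Euc d) (t : ℝ) :
    ‖v - t • w‖ ^ 2 = ‖v‖ ^ 2 - 2 * t * ⟪v, w⟫ + t ^ 2 * ‖w‖ ^ 2 := by
  rw [norm_sub_sq_real, real_inner_smul_right, norm_smul, Real.norm_eq_abs, mul_pow, sq_abs]
  ring

theorem sinAngle_mul_norm_le_norm_sub_smul (v : Euc d) {w : Euc d} (hw : w ≠ 0) (t : ℝ) :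
    sinAngle v w * ‖v‖ ≤ ‖v - t • w‖ := by
  have hw' : 0 < ‖w‖ ^ 2 := by positivity
  refine (sq_le_sq₀ (mul_nonneg (sinAngle_nonneg v w) (norm_nonneg v)) (norm_nonneg _)).1 ?_
  refine le_of_mul_le_mul_right ?_ hw'
  rw [sq_sinAngle_mul_norm_mul_sq_norm, norm_sub_smul_sq]
  nlinarith [sq_nonneg (t * ‖w‖ ^ 2 - ⟪v, w⟫)]

theorem exists_norm_sub_smul_le_sinAngle_mul_norm (v : Euc d) {w : Euc d} (hw : w ≠ 0) :
    ∃ t : ℝ, ‖v - t • w‖ ≤ sinAngle v w * ‖v‖ := by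
  have hw' : 0 < ‖w‖ ^ 2 := by positivity
  refine ⟨⟪v, w⟫ / ‖w‖ ^ 2, (sq_le_sq₀ (norm_nonneg _)
    (mul_nonneg (sinAngle_nonneg v w) (norm_nonneg v))).1 (le_of_eq ?_)⟩
  refine mul_right_cancel₀ hw'.ne' ?_
  rw [sq_sinAngle_mul_norm_mul_sq_norm, norm_sub_smul_sq]
  field_simp
  ring

theorem subAngle_le_angle {P Q : Submodule ℝ (Euc d)} {x y : Euc d} (hx : x ∈ P) (hx0 : x ≠ 0)
    (hy : y ∈ Q) (hy0 : y ≠ 0) : subAngle P Q ≤ angle x y :=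
  csInf_le ⟨0, by rintro _ ⟨v, -, -, w, -, -, rfl⟩; exact angle_nonneg v w⟩
    ⟨x, hx, hx0, y, hy, hy0, rfl⟩

theorem subAngle_comm (P Q : Submodule ℝ (Euc d)) : subAngle P Q = subAngle Q P := by
  have key (P Q : Submodule ℝ (Euc d)) :
      { θ | ∃ v ∈ P, v ≠ 0 ∧ ∃ w ∈ Q, w ≠ 0 ∧ θ = angle v w } ⊆
        { θ | ∃ v ∈ Q, v ≠ 0 ∧ ∃ w ∈ P, w ≠ 0 ∧ θ = angle v w } := by
    rintro _ ⟨v, hv, hv0, w, hw, hw0, rfl⟩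
    exact ⟨w, hw, hw0, v, hv, hv0, angle_comm v w⟩
  exact congrArg sInf ((key P Q).antisymm (key Q P))

theorem disjoint_of_le_subAngle {α : ℝ} (hα : 0 < α) {P Q : Submodule ℝ (Euc d)}
    (h : α ≤ subAngle P Q) : Disjoint P Q := by
  refine Submodule.disjoint_def.2 fun x hxP hxQ => by_contra fun hx0 => ?_
  have := h.trans (subAngle_le_angle hxP hx0 hxQ hx0)
  rw [angle_self hx0] at this
  linarith

theorem sin_mul_norm_le_norm_add {α : ℝ} (hα : 0 ≤ α) {P Q : Submodule ℝ (Euc d)}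
    (h : α ≤ subAngle P Q) {x y : Euc d} (hx : x ∈ P) (hy : y ∈ Q) :
    Real.sin α * ‖y‖ ≤ ‖x + y‖ := by
  rcases eq_or_ne y 0 with rfl | hy0
  · simp
  rcases eq_or_ne x 0 with rfl | hx0
  · simpa using mul_le_of_le_one_left (norm_nonneg y) (Real.sin_le_one α)
  have h₁ := h.trans (subAngle_le_angle hx hx0 hy hy0)
  have h₂ := h.trans (subAngle_le_angle (P.neg_mem hx) (neg_ne_zero.2 hx0) hy hy0)
  rw [angle_neg_left] at h₂
  have hsin : Real.sin α ≤ sinAngle y x := by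
    rw [sinAngle, angle_comm]
    exact sin_le_sin_of_le_of_le_pi_sub hα h₁ (by linarith)
  calc Real.sin α * ‖y‖ ≤ sinAngle y x * ‖y‖ := by gcongr
    _ ≤ ‖y - (-1 : ℝ) • x‖ := sinAngle_mul_norm_le_norm_sub_smul y hx0 (-1)
    _ = ‖x + y‖ := by rw [neg_one_smul, sub_neg_eq_add, add_comm]

theorem sin_mul_norm_le_norm_add' {α : ℝ} (hα : 0 ≤ α) {P Q : Submodule ℝ (Euc d)}
    (h : α ≤ subAngle P Q) {x y : Euc d} (hx : x ∈ P) (hy : y ∈ Q) :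
    Real.sin α * ‖x‖ ≤ ‖x + y‖ :=
  add_comm x y ▸ sin_mul_norm_le_norm_add hα (subAngle_comm P Q ▸ h) hy hx

/-- The inner minimum in `grassDist`; `sinDist v W * ‖v‖` is the distance from `v` to `W`. -/
def sinDist (v : Euc d) (W : Submodule ℝ (Euc d)) : ℝ :=
  sInf { s | ∃ w ∈ W, w ≠ 0 ∧ s = sinAngle v w }

theorem sinDist_nonneg (v : Euc d) (W : Submodule ℝ (Euc d)) : 0 ≤ sinDist v W :=
  Real.sInf_nonneg (by rintro _ ⟨w, -, -, rfl⟩; exact sinAngle_nonneg v w)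

theorem sinDist_le_sinAngle (v : Euc d) {W : Submodule ℝ (Euc d)} {w : Euc d} (hw : w ∈ W)
    (hw0 : w ≠ 0) : sinDist v W ≤ sinAngle v w :=
  csInf_le ⟨0, by rintro _ ⟨w, -, -, rfl⟩; exact sinAngle_nonneg v w⟩ ⟨w, hw, hw0, rfl⟩

theorem sinDist_le_one (v : Euc d) (W : Submodule ℝ (Euc d)) : sinDist v W ≤ 1 := by
  rcases Set.eq_empty_or_nonempty { s | ∃ w ∈ W, w ≠ 0 ∧ s = sinAngle v w } with
    hS | ⟨_, w, hw, hw0, rfl⟩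
  · rw [sinDist, hS, Real.sInf_empty]
    exact zero_le_one
  · exact (sinDist_le_sinAngle v hw hw0).trans (Real.sin_le_one _)

theorem sinDist_mul_norm_le_norm_sub (v : Euc d) {W : Submodule ℝ (Euc d)} {w : Euc d}
    (hw : w ∈ W) (hw0 : w ≠ 0) : sinDist v W * ‖v‖ ≤ ‖v - w‖ :=
  calc sinDist v W * ‖v‖ ≤ sinAngle v w * ‖v‖ := by gcongr; exact sinDist_le_sinAngle v hw hw0
    _ ≤ ‖v - (1 : ℝ) • w‖ := sinAngle_mul_norm_le_norm_sub_smul v hw0 1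
    _ = ‖v - w‖ := by rw [one_smul]

theorem le_sinDist_mul_norm {W : Submodule ℝ (Euc d)} (hW : W ≠ ⊥) {v : Euc d} {a : ℝ}
    (h : ∀ w ∈ W, a ≤ ‖v - w‖) : a ≤ sinDist v W * ‖v‖ := by
  rcases eq_or_ne v 0 with rfl | hv0
  · simpa using h 0 W.zero_mem
  rw [← div_le_iff₀ (norm_pos_iff.2 hv0)]
  obtain ⟨w₀, hw₀, hw₀0⟩ := W.ne_bot_iff.1 hW
  refine le_csInf ⟨_, w₀, hw₀, hw₀0, rfl⟩ ?_
  rintro _ ⟨w, hw, hw0, rfl⟩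
  obtain ⟨t, ht⟩ := exists_norm_sub_smul_le_sinAngle_mul_norm v hw0
  rw [div_le_iff₀ (norm_pos_iff.2 hv0)]
  exact (h _ (W.smul_mem t hw)).trans ht

theorem sinDist_mul_norm_le_grassDist_mul_norm {P Q : Submodule ℝ (Euc d)} {v : Euc d}
    (hv : v ∈ P) : sinDist v Q * ‖v‖ ≤ grassDist P Q * ‖v‖ := by
  rcases eq_or_ne v 0 with rfl | hv0
  · simp
  gcongr
  exact le_csSup ⟨1, by rintro _ ⟨w, -, -, rfl⟩; exact sinDist_le_one w Q⟩ ⟨v, hv, hv0, rfl⟩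

theorem grassDist_nonneg (P Q : Submodule ℝ (Euc d)) : 0 ≤ grassDist P Q :=
  Real.sSup_nonneg (by rintro _ ⟨v, -, -, rfl⟩; exact sinDist_nonneg v Q)

theorem mul_grassDist_le {P Q : Submodule ℝ (Euc d)} {c D : ℝ} (hD : 0 ≤ D)
    (h : ∀ v ∈ P, v ≠ 0 → c * sinDist v Q ≤ D) : c * grassDist P Q ≤ D := by
  rcases lt_or_ge c 0 with hc | hc
  · nlinarith [grassDist_nonneg P Q]
  rw [grassDist, ← smul_eq_mul, ← Real.sSup_smul_of_nonneg hc]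
  refine Real.sSup_le ?_ hD
  rintro _ ⟨_, ⟨v, hv, hv0, rfl⟩, rfl⟩
  exact h v hv hv0

theorem norm_le_norm_of_add_mem {α : ℝ} (hα : 0 ≤ α) {P Q P' : Submodule ℝ (Euc d)}
    (hP : P ≠ ⊥) (hPQ : α ≤ subAngle P Q) (hP' : grassDist P' P < Real.sin α / 2)
    {x y : Euc d} (hx : x ∈ P) (hy : y ∈ Q) (hxy : x + y ∈ P') : ‖y‖ ≤ ‖x‖ := by
  have hsin : 0 < Real.sin α := by linarith [grassDist_nonneg P' P]
  have hdist : Real.sin α * ‖y‖ ≤ sinDist (x + y) P * ‖x + y‖ := by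
    refine le_sinDist_mul_norm hP fun w hw => ?_
    simpa [sub_add_eq_add_sub] using sin_mul_norm_le_norm_add hα hPQ (P.sub_mem hx hw) hy
  have := sinDist_mul_norm_le_grassDist_mul_norm (Q := P) hxy
  nlinarith [norm_add_le x y, norm_nonneg (x + y)]

theorem sin_mul_norm_sub_le_grassDist_mul_norm {α : ℝ} (hα : 0 ≤ α)
    {P Q P₁ P₂ : Submodule ℝ (Euc d)} (hP : P ≠ ⊥) (hP₂ : P₂ ≠ ⊥) (hPQ : Codisjoint P Q)
    (hangle : α ≤ subAngle P Q) (h₁ : grassDist P₁ P < Real.sin α / 2)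
    (h₂ : grassDist P₂ P < Real.sin α / 2) {x y₁ y₂ : Euc d} (hx : x ∈ P) (hy₁ : y₁ ∈ Q)
    (hy₂ : y₂ ∈ Q) (hxy₁ : x + y₁ ∈ P₁) (hxy₂ : x + y₂ ∈ P₂) :
    Real.sin α / 4 * ‖y₁ - y₂‖ ≤ grassDist P₁ P₂ * ‖x‖ := by
  have hsin : 0 < Real.sin α := by linarith [grassDist_nonneg P₁ P]
  have hdist : Real.sin α / 2 * ‖y₁ - y₂‖ ≤ sinDist (x + y₁) P₂ * ‖x + y₁‖ := by
    refine le_sinDist_mul_norm hP₂ fun w hw => ?_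
    obtain ⟨x₃, hx₃, y₃, hy₃, rfl⟩ :=
      Submodule.mem_sup.1 (hPQ.eq_top ▸ Submodule.mem_top : w ∈ P ⊔ Q)
    have hsplit : x + y₁ - (x₃ + y₃) = (x - x₃) + (y₁ - y₃) := by abel
    have hP' := sin_mul_norm_le_norm_add' hα hangle (P.sub_mem hx hx₃) (Q.sub_mem hy₁ hy₃)
    have hQ' := sin_mul_norm_le_norm_add hα hangle (P.sub_mem hx hx₃) (Q.sub_mem hy₁ hy₃)
    have hgraph : ‖y₃ - y₂‖ ≤ ‖x₃ - x‖ :=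
      norm_le_norm_of_add_mem hα hP hangle h₂ (P.sub_mem hx₃ hx) (Q.sub_mem hy₃ hy₂)
        (by convert P₂.sub_mem hw hxy₂ using 1; abel)
    rw [← hsplit] at hP' hQ'
    rw [norm_sub_rev x₃ x] at hgraph
    nlinarith [norm_sub_le_norm_sub_add_norm_sub y₁ y₃ y₂]
  have hx₁ : ‖x + y₁‖ ≤ 2 * ‖x‖ := by
    linarith [norm_add_le x y₁, norm_le_norm_of_add_mem hα hP hangle h₁ hx hy₁ hxy₁]
  nlinarith [sinDist_mul_norm_le_grassDist_mul_norm (Q := P₂) hxy₁, grassDist_nonneg P₁ P₂]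

theorem sin_mul_norm_mul_sinDist_le {α : ℝ} (hα : 0 ≤ α) {P Q P₂ : Submodule ℝ (Euc d)}
    (hangle : α ≤ subAngle P Q) {x y₁ y₂ : Euc d} (hx : x ∈ P) (hy₁ : y₁ ∈ Q)
    (hxy₂ : x + y₂ ∈ P₂) (hxy₂0 : x + y₂ ≠ 0) :
    Real.sin α * ‖x‖ * sinDist (x + y₁) P₂ ≤ ‖y₁ - y₂‖ :=
  calc Real.sin α * ‖x‖ * sinDist (x + y₁) P₂ ≤ ‖x + y₁‖ * sinDist (x + y₁) P₂ := by
        gcongr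
        · exact sinDist_nonneg _ _
        · exact sin_mul_norm_le_norm_add' hα hangle hx hy₁
    _ ≤ ‖y₁ - y₂‖ := by
        simpa [mul_comm, add_sub_add_left_eq_sub] using
          sinDist_mul_norm_le_norm_sub (x + y₁) hxy₂ hxy₂0

theorem exists_add_mem_of_codisjoint {R M : Type*} [Ring R] [AddCommGroup M] [Module R M]
    {P Q : Submodule R M} (h : Codisjoint P Q) (x : M) : ∃ y ∈ Q, x + y ∈ P := by
  obtain ⟨p, hp, q, hq, rfl⟩ := Submodule.mem_sup.1 (h.eq_top ▸ Submodule.mem_top : x ∈ P ⊔ Q)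
  exact ⟨-q, Q.neg_mem hq, by rwa [add_neg_cancel_right]⟩

theorem mul_grassDist_le_grassDist_map {α m M : ℝ} (hα : 0 ≤ α) {f : Euc d →ₗ[ℝ] Euc d}
    (hf : Function.Bijective f) {P Q P₁ P₂ : Submodule ℝ (Euc d)} (hP : P ≠ ⊥) (hP₂ : P₂ ≠ ⊥)
    (hPQ : IsCompl P Q) (hP₁Q : Disjoint P₁ Q) (hP₂Q : Codisjoint P₂ Q)
    (hangle : α ≤ subAngle P Q) (hangle' : α ≤ subAngle (P.map f) (Q.map f))
    (h₁ : grassDist (P₁.map f) (P.map f) < Real.sin α / 2)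
    (h₂ : grassDist (P₂.map f) (P.map f) < Real.sin α / 2)
    (hm0 : 0 ≤ m) (hm : ∀ y ∈ Q, m * ‖y‖ ≤ ‖f y‖) (hM : ∀ x ∈ P, ‖f x‖ ≤ M * ‖x‖) :
    Real.sin α ^ 2 / 4 * (m / M) * grassDist P₁ P₂ ≤ grassDist (P₁.map f) (P₂.map f) := by
  have hsin : 0 < Real.sin α := by linarith [grassDist_nonneg (P₁.map f) (P.map f)]
  have hmap_ne_bot {W : Submodule ℝ (Euc d)} (hW : W ≠ ⊥) : W.map f ≠ ⊥ := fun h =>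
    hW (Submodule.map_injective_of_injective hf.1 (h.trans (Submodule.map_bot f).symm))
  set D := grassDist (P₁.map f) (P₂.map f)
  refine mul_grassDist_le (grassDist_nonneg _ _) fun v hv hv0 => ?_
  obtain ⟨u, hu, q₁, hq₁, rfl⟩ :=
    Submodule.mem_sup.1 (hPQ.sup_eq_top ▸ Submodule.mem_top : v ∈ P ⊔ Q)
  obtain ⟨q₂, hq₂, hu₂⟩ := exists_add_mem_of_codisjoint hP₂Q u
  have hu0 : u ≠ 0 := by
    rintro rfl
    exact hv0 (Submodule.disjoint_def.1 hP₁Q _ hv (by rwa [zero_add]))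
  have hu₂0 : u + q₂ ≠ 0 := fun h =>
    hu0 (Submodule.disjoint_def.1 hPQ.disjoint u hu
      (by rw [eq_neg_of_add_eq_zero_left h]; exact Q.neg_mem hq₂))
  set s := sinDist (u + q₁) P₂
  have hsrc : Real.sin α * ‖u‖ * s ≤ ‖q₁ - q₂‖ :=
    sin_mul_norm_mul_sinDist_le hα hangle hu hq₁ hu₂ hu₂0
  have htgt := sin_mul_norm_sub_le_grassDist_mul_norm hα (hmap_ne_bot hP) (hmap_ne_bot hP₂)
    (Submodule.codisjoint_map hf.2 hPQ.codisjoint) hangle' h₁ h₂ (Submodule.mem_map_of_mem hu)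
    (Submodule.mem_map_of_mem hq₁) (Submodule.mem_map_of_mem hq₂)
    (map_add f u q₁ ▸ Submodule.mem_map_of_mem hv)
    (map_add f u q₂ ▸ Submodule.mem_map_of_mem hu₂)
  rw [← map_sub] at htgt
  have hu_pos : 0 < ‖u‖ := norm_pos_iff.2 hu0
  have hM_pos : 0 < M := by
    have := hM u hu
    have : 0 < ‖f u‖ := norm_pos_iff.2 ((map_ne_zero_iff f hf.1).2 hu0)
    nlinarith
  rw [show Real.sin α ^ 2 / 4 * (m / M) * s = Real.sin α ^ 2 / 4 * m * s / M by ring,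
    div_le_iff₀ hM_pos]
  refine le_of_mul_le_mul_right ?_ hu_pos
  calc Real.sin α ^ 2 / 4 * m * s * ‖u‖ = Real.sin α / 4 * m * (Real.sin α * ‖u‖ * s) := by ring
    _ ≤ Real.sin α / 4 * m * ‖q₁ - q₂‖ := by gcongr
    _ ≤ Real.sin α / 4 * ‖f (q₁ - q₂)‖ := by
        rw [mul_assoc]
        gcongr
        exact hm _ (Q.sub_mem hq₁ hq₂)
    _ ≤ D * ‖f u‖ := htgt
    _ ≤ D * (M * ‖u‖) := by gcongr; exacts [grassDist_nonneg _ _, hM u hu]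
    _ = D * M * ‖u‖ := by ring

theorem bijective_toEuclideanCLM (g : GL (Fin d) ℝ) :
    Function.Bijective (Matrix.toEuclideanCLM (𝕜 := ℝ) (g : Matrix (Fin d) (Fin d) ℝ)) :=
  (ContinuousLinearEquiv.unitsEquiv ℝ (Euc d)
    (Units.map (Matrix.toEuclideanCLM (n := Fin d) (𝕜 := ℝ)).toMonoidHom g)).bijective

theorem inv_norm_mul_norm_act_mem (g : Matrix (Fin d) (Fin d) ℝ) {W : Submodule ℝ (Euc d)}
    {x : Euc d} (hx : x ∈ W) (hx0 : x ≠ 0) :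
    ‖x‖⁻¹ * ‖act g x‖ ∈ { t | ∃ v ∈ W, ‖v‖ = 1 ∧ t = ‖act g v‖ } :=
  ⟨‖x‖⁻¹ • x, W.smul_mem _ hx, norm_smul_inv_norm hx0, by simp [act, norm_smul]⟩

theorem minRestrict_nonneg (g : Matrix (Fin d) (Fin d) ℝ) (W : Submodule ℝ (Euc d)) :
    0 ≤ minRestrict g W :=
  Real.sInf_nonneg (by rintro _ ⟨v, -, -, rfl⟩; exact norm_nonneg _)

theorem minRestrict_mul_norm_le (g : Matrix (Fin d) (Fin d) ℝ) {W : Submodule ℝ (Euc d)}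
    {x : Euc d} (hx : x ∈ W) : minRestrict g W * ‖x‖ ≤ ‖act g x‖ := by
  rcases eq_or_ne x 0 with rfl | hx0
  · simp
  have := csInf_le ⟨0, by rintro _ ⟨v, -, -, rfl⟩; exact norm_nonneg _⟩
    (inv_norm_mul_norm_act_mem g hx hx0)
  rwa [le_inv_mul_iff₀ (norm_pos_iff.2 hx0), mul_comm] at this

theorem norm_act_le_normRestrict_mul (g : Matrix (Fin d) (Fin d) ℝ) {W : Submodule ℝ (Euc d)}
    {x : Euc d} (hx : x ∈ W) : ‖act g x‖ ≤ normRestrict g W * ‖x‖ := by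
  rcases eq_or_ne x 0 with rfl | hx0
  · simp [act]
  have hbdd : BddAbove { t | ∃ v ∈ W, ‖v‖ = 1 ∧ t = ‖act g v‖ } := by
    refine ⟨opNorm g, ?_⟩
    rintro _ ⟨v, -, hv, rfl⟩
    simpa [act, opNorm, hv] using (Matrix.toEuclideanCLM (𝕜 := ℝ) g).le_opNorm v
  have := le_csSup hbdd (inv_norm_mul_norm_act_mem g hx hx0)
  rwa [inv_mul_le_iff₀ (norm_pos_iff.2 hx0), mul_comm] at this

end

theorem stmt7_general {d : ℕ} (p : ℕ) (hp1 : 1 ≤ p) (α : ℝ) (hα : 0 < α) :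
    ∃ δ > (0 : ℝ), ∃ b > (0 : ℝ), ∀ g : GL (Fin d) ℝ, ∀ P Q : Submodule ℝ (Euc d),
      Module.finrank ℝ P = p → Module.finrank ℝ Q = d - p →
      α ≤ subAngle P Q → α ≤ subAngle (mapMat (mat g) P) (mapMat (mat g) Q) →
      ∀ P₁ P₂ : Submodule ℝ (Euc d),
        Module.finrank ℝ P₁ = p → Module.finrank ℝ P₂ = p →
        P₁ ⊓ Q = ⊥ → P₂ ⊓ Q = ⊥ →
        grassDist (mapMat (mat g) P₁) (mapMat (mat g) P) < δ →
        grassDist (mapMat (mat g) P₂) (mapMat (mat g) P) < δ →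
        b * (minRestrict (mat g) Q / normRestrict (mat g) P) * grassDist P₁ P₂ ≤
          grassDist (mapMat (mat g) P₁) (mapMat (mat g) P₂) := by
  set β := min α (Real.pi / 2)
  have hβ : 0 < β := lt_min hα (by positivity)
  have hsin : 0 < Real.sin β := Real.sin_pos_of_pos_of_lt_pi hβ
    ((min_le_right _ _).trans_lt (by linarith [Real.pi_pos]))
  refine ⟨Real.sin β / 2, by positivity, Real.sin β ^ 2 / 4, by positivity, ?_⟩
  intro g P Q hP hQ hPQ hgPQ P₁ P₂ hP₁ hP₂ hP₁Q hP₂Q h₁ h₂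
  have hβPQ : β ≤ subAngle P Q := (min_le_left _ _).trans hPQ
  have hne {W : Submodule ℝ (Euc d)} (hW : Module.finrank ℝ W = p) : W ≠ ⊥ :=
    Submodule.one_le_finrank_iff.1 (hW ▸ hp1)
  have hdim {W : Submodule ℝ (Euc d)} (hW : Module.finrank ℝ W = p) :
      Module.finrank ℝ (Euc d) ≤ Module.finrank ℝ W + Module.finrank ℝ Q := by
    have := W.finrank_le
    rw [finrank_euclideanSpace_fin] at this ⊢
    omega
  exact mul_grassDist_le_grassDist_map hβ.le (bijective_toEuclideanCLM g) (hne hP) (hne hP₂)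
    ((Submodule.isCompl_iff_disjoint P Q (hdim hP)).2
      (disjoint_of_le_subAngle hβ hβPQ))
    (disjoint_iff.2 hP₁Q)
    (codisjoint_iff.2 (Submodule.eq_top_of_disjoint P₂ Q (hdim hP₂) (disjoint_iff.2 hP₂Q)))
    hβPQ ((min_le_left _ _).trans hgPQ) h₁ h₂
    (minRestrict_nonneg _ _) (fun _ hy => minRestrict_mul_norm_le _ hy)
    (fun _ hx => norm_act_le_normRestrict_mul _ hx)

/-- Corollary 2.10 (`l.expandold`) of the paper. -/
theorem stmt7 {d : ℕ} (hd : 2 ≤ d) (p : ℕ) (hp1 : 1 ≤ p) (hpd : p ≤ d - 1)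
    (α : ℝ) (hα : 0 < α) :
    ∃ δ > (0 : ℝ), ∃ b > (0 : ℝ), ∀ g : GL (Fin d) ℝ, ∀ P Q : Submodule ℝ (Euc d),
      Module.finrank ℝ P = p → Module.finrank ℝ Q = d - p →
      α ≤ subAngle P Q → α ≤ subAngle (mapMat (mat g) P) (mapMat (mat g) Q) →
      ∀ P₁ P₂ : Submodule ℝ (Euc d),
        Module.finrank ℝ P₁ = p → Module.finrank ℝ P₂ = p →
        P₁ ⊓ Q = ⊥ → P₂ ⊓ Q = ⊥ →
        grassDist (mapMat (mat g) P₁) (mapMat (mat g) P) < δ →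
        grassDist (mapMat (mat g) P₂) (mapMat (mat g) P) < δ →
        b * (minRestrict (mat g) Q / normRestrict (mat g) P) * grassDist P₁ P₂ ≤
          grassDist (mapMat (mat g) P₁) (mapMat (mat g) P₂) :=
  stmt7_general p hp1 α hα

end Paper
end
end

section
/- Let X be a compact metric space, θ: X → X a homeomorphism, and ψ0: X → GL(d,ℝ) continuous. Suppose the associated cocycle admits dominated splittings E¹ ⊕ F¹ of index p₁ and E² ⊕ F² of index p₂ with p₁ ≤ p₂. Then for every x ∈ X one has E²_x ⊆ E¹_x and F¹_x ⊆ F²_x. In particular, a dominated splitting of a given index is unique. -/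
noncomputable section

open scoped Matrix RealInnerProductSpace
open Filter Topology

namespace Paper

/-- The cocycle `ψ^n_x = ψ0(θ^{n-1} x) ⋯ ψ0(θ x) · ψ0(x)`. -/
def cocyc {X : Type*} [TopologicalSpace X] {d : ℕ} (θ : X ≃ₜ X) (ψ0 : X → GL (Fin d) ℝ) :
    ℕ → X → GL (Fin d) ℝ
  | 0, _ => 1
  | n + 1, x => ψ0 ((θ : X → X)^[n] x) * cocyc θ ψ0 n x

/-- A dominated splitting of index `p` for the cocycle over `θ` defined by `ψ0`:
an equivariant decomposition `ℝ^d = E_x ⊕ F_x` with `dim F_x = p` along which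
`F` uniformly exponentially dominates `E`. -/
def IsDominatedSplitting {X : Type*} [TopologicalSpace X] {d : ℕ}
    (θ : X ≃ₜ X) (ψ0 : X → GL (Fin d) ℝ) (p : ℕ)
    (Ef Ff : X → Submodule ℝ (Euc d)) : Prop :=
  (∀ x, Module.finrank ℝ (Ff x) = p) ∧
  (∀ x, IsCompl (Ef x) (Ff x)) ∧
  (∀ x, mapMat (mat (ψ0 x)) (Ef x) = Ef (θ x)) ∧
  (∀ x, mapMat (mat (ψ0 x)) (Ff x) = Ff (θ x)) ∧
  ∃ c > (0 : ℝ), ∃ μ > (0 : ℝ), ∀ x : X, ∀ n : ℕ,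
    ∀ u ∈ Ef x, u ≠ 0 → ∀ w ∈ Ff x, w ≠ 0 →
      ‖act (mat (cocyc θ ψ0 n x)) u‖ / ‖u‖ ≤
        c * Real.exp (-μ * (n : ℝ)) * (‖act (mat (cocyc θ ψ0 n x)) w‖ / ‖w‖)

/-!
Both bundles of a dominated splitting are determined by growth rates. Forward in time, every
vector of `E_x` becomes negligible (`=o`) compared with any vector outside `E_x`; backward in
time, the same holds for `F_x`. If two subspaces both have this property for the same sequence
of injective maps, the one of smaller dimension lies in the other: otherwise a vector of the
first outside the second and a vector of the second outside the first would each be negligible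
compared with the other. Applied forward to `E¹, E²` and backward to `F¹, F²`, this gives both
inclusions, and equal indices give equality.
-/

open Asymptotics

theorem isLittleO_of_norm_le_exp_mul {E F : Type*} [Norm E] [SeminormedAddGroup F]
    {f : ℕ → E} {g : ℕ → F} {C μ : ℝ} (hμ : 0 < μ)
    (h : ∀ n : ℕ, ‖f n‖ ≤ C * Real.exp (-μ * n) * ‖g n‖) : f =o[atTop] g := by
  have hK : Tendsto (fun n : ℕ => C * Real.exp (-μ * n)) atTop (𝓝 0) := by
    simpa using (Real.tendsto_exp_atBot.comp
      (tendsto_natCast_atTop_atTop.const_mul_atTop_of_neg (neg_lt_zero.2 hμ))).const_mul C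
  refine isLittleO_iff.2 fun ε hε => ?_
  filter_upwards [hK.eventually_le_const hε] with n hn
  exact (h n).trans (mul_le_mul_of_nonneg_right hn (norm_nonneg _))

section SlowSubspace

variable {𝕜 V : Type*} [NormedField 𝕜] [NormedAddCommGroup V] [NormedSpace 𝕜 V]

theorem eq_zero_of_isLittleO_of_isLittleO (T : ℕ → V →L[𝕜] V)
    (hT : ∀ n, Function.Injective (T n)) {u v : V}
    (huv : (fun n => T n u) =o[atTop] fun n => T n v)
    (hvu : (fun n => T n v) =o[atTop] fun n => T n u) : u = 0 := by
  by_contra hu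
  refine isLittleO_irrefl (Eventually.frequently (Eventually.of_forall fun n => ?_)) (huv.trans hvu)
  exact (map_ne_zero_iff (T n) (hT n)).2 hu

def IsSlowSubspace (T : ℕ → V →L[𝕜] V) (A : Submodule 𝕜 V) : Prop :=
  ∀ u ∈ A, ∀ v ∉ A, (fun n => T n u) =o[atTop] fun n => T n v

theorem isSlowSubspace_of_codisjoint {T : ℕ → V →L[𝕜] V} {E F : Submodule 𝕜 V}
    (hEF : Codisjoint E F)
    (hdom : ∀ u ∈ E, ∀ w ∈ F, w ≠ 0 → (fun n => T n u) =o[atTop] fun n => T n w) :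
    IsSlowSubspace T E := by
  intro u hu v hv
  obtain ⟨e, f, he, hf, rfl⟩ := Submodule.codisjoint_iff_exists_add_eq.1 hEF v
  have hf0 : f ≠ 0 := by
    rintro rfl
    exact hv (by simpa using he)
  simpa only [map_add] using (hdom u hu f hf hf0).trans_isBigO (hdom e he f hf hf0).right_isBigO_add

theorem IsSlowSubspace.le_of_finrank_le {T : ℕ → V →L[𝕜] V} (hT : ∀ n, Function.Injective (T n))
    {A B : Submodule 𝕜 V} [FiniteDimensional 𝕜 A] (hA : IsSlowSubspace T A)
    (hB : IsSlowSubspace T B) (hAB : Module.finrank 𝕜 A ≤ Module.finrank 𝕜 B) : A ≤ B := by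
  intro w hwA
  by_contra hwB
  by_cases hBA : B ≤ A
  · exact hwB (Submodule.eq_of_le_of_finrank_le hBA hAB ▸ hwA)
  obtain ⟨u, huB, huA⟩ := SetLike.not_le_iff_exists.1 hBA
  exact hwB (eq_zero_of_isLittleO_of_isLittleO T hT (hA w hwA u huA) (hB u huB w hwB) ▸ B.zero_mem)

end SlowSubspace

section Cocycle

variable {d : ℕ}

theorem act_mul (g h : Matrix (Fin d) (Fin d) ℝ) (v : Euc d) :
    act (g * h) v = act g (act h v) := by
  simp [act, map_mul]

theorem act_inv_act (g : GL (Fin d) ℝ) (v : Euc d) : act (mat g⁻¹) (act (mat g) v) = v := by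
  rw [← act_mul]
  simp [mat, act]

theorem act_act_inv (g : GL (Fin d) ℝ) (v : Euc d) : act (mat g) (act (mat g⁻¹) v) = v := by
  simpa using act_inv_act g⁻¹ v

theorem act_injective (g : GL (Fin d) ℝ) : Function.Injective (act (mat g)) :=
  Function.LeftInverse.injective (g := act (mat g⁻¹)) (act_inv_act g)

theorem mat_mul (g h : GL (Fin d) ℝ) : mat (g * h) = mat g * mat h := rfl

theorem mapMat_mul (g h : Matrix (Fin d) (Fin d) ℝ) (P : Submodule ℝ (Euc d)) :
    mapMat (g * h) P = mapMat g (mapMat h P) := by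
  simp only [mapMat, map_mul, ContinuousLinearMap.toLinearMap_mul, Module.End.mul_eq_comp,
    Submodule.map_comp]

variable {X : Type*} [TopologicalSpace X] (θ : X ≃ₜ X) (ψ0 : X → GL (Fin d) ℝ)

def cocycCLM (x : X) (n : ℕ) : Euc d →L[ℝ] Euc d :=
  Matrix.toEuclideanCLM (𝕜 := ℝ) (mat (cocyc θ ψ0 n x))

/-- `ψ^{-n}_x`, the cocycle of the inverse dynamics. -/
def invCocycCLM (x : X) (n : ℕ) : Euc d →L[ℝ] Euc d :=
  Matrix.toEuclideanCLM (𝕜 := ℝ) (mat (cocyc θ ψ0 n ((θ.symm : X → X)^[n] x))⁻¹)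

theorem cocycCLM_apply (x : X) (n : ℕ) (v : Euc d) :
    cocycCLM θ ψ0 x n v = act (mat (cocyc θ ψ0 n x)) v := rfl

theorem invCocycCLM_apply (x : X) (n : ℕ) (v : Euc d) :
    invCocycCLM θ ψ0 x n v = act (mat (cocyc θ ψ0 n ((θ.symm : X → X)^[n] x))⁻¹) v := rfl

theorem cocycCLM_injective (x : X) (n : ℕ) : Function.Injective (cocycCLM θ ψ0 x n) :=
  act_injective _

theorem invCocycCLM_injective (x : X) (n : ℕ) : Function.Injective (invCocycCLM θ ψ0 x n) :=
  act_injective _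

variable {θ ψ0}

theorem mapMat_cocyc {E : X → Submodule ℝ (Euc d)}
    (hE : ∀ x, mapMat (mat (ψ0 x)) (E x) = E (θ x)) (n : ℕ) (x : X) :
    mapMat (mat (cocyc θ ψ0 n x)) (E x) = E ((θ : X → X)^[n] x) := by
  induction n with
  | zero => simp [cocyc, mat, mapMat, Module.End.one_eq_id]
  | succ n ih => rw [cocyc, mat_mul, mapMat_mul, ih, hE, Function.iterate_succ_apply']

theorem invCocycCLM_mem {E : X → Submodule ℝ (Euc d)}
    (hE : ∀ x, mapMat (mat (ψ0 x)) (E x) = E (θ x)) {x : X} {z : Euc d} (hz : z ∈ E x)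
    (n : ℕ) : invCocycCLM θ ψ0 x n z ∈ E ((θ.symm : X → X)^[n] x) := by
  set y := (θ.symm : X → X)^[n] x
  have hy : (θ : X → X)^[n] y = x := Function.LeftInverse.iterate θ.apply_symm_apply n x
  rw [← hy, ← mapMat_cocyc hE] at hz
  obtain ⟨z', hz', rfl⟩ := Submodule.mem_map.1 hz
  convert hz' using 1
  exact act_inv_act _ z'

end Cocycle

namespace IsDominatedSplitting

variable {X : Type*} [TopologicalSpace X] {d : ℕ} {θ : X ≃ₜ X} {ψ0 : X → GL (Fin d) ℝ} {p : ℕ}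
  {Ef Ff : X → Submodule ℝ (Euc d)}

theorem finrank_add (h : IsDominatedSplitting θ ψ0 p Ef Ff) (x : X) :
    Module.finrank ℝ (Ef x) + p = d := by
  simpa [h.1 x] using Submodule.finrank_add_eq_of_isCompl (h.2.1 x)

theorem isLittleO_cocycCLM (h : IsDominatedSplitting θ ψ0 p Ef Ff) {x : X} {u w : Euc d}
    (hu : u ∈ Ef x) (hw : w ∈ Ff x) (hw0 : w ≠ 0) :
    (fun n => cocycCLM θ ψ0 x n u) =o[atTop] fun n => cocycCLM θ ψ0 x n w := by
  obtain ⟨-, -, -, -, c, -, μ, hμ, hdom⟩ := h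
  rcases eq_or_ne u 0 with rfl | hu0
  · simp
  refine isLittleO_of_norm_le_exp_mul (C := c * ‖u‖ / ‖w‖) hμ fun n => ?_
  have hbound := (div_le_iff₀ (norm_pos_iff.2 hu0)).1 (hdom x n u hu hu0 w hw hw0)
  simp only [cocycCLM_apply]
  exact hbound.trans_eq (by ring)

theorem isLittleO_invCocycCLM (h : IsDominatedSplitting θ ψ0 p Ef Ff) {x : X} {u w : Euc d}
    (hu : u ∈ Ff x) (hw : w ∈ Ef x) (hw0 : w ≠ 0) :
    (fun n => invCocycCLM θ ψ0 x n u) =o[atTop] fun n => invCocycCLM θ ψ0 x n w := by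
  obtain ⟨-, -, hE, hF, c, -, μ, hμ, hdom⟩ := h
  rcases eq_or_ne u 0 with rfl | hu0
  · simp
  refine isLittleO_of_norm_le_exp_mul (C := c * ‖u‖ / ‖w‖) hμ fun n => ?_
  set g := cocyc θ ψ0 n ((θ.symm : X → X)^[n] x)
  set u' := invCocycCLM θ ψ0 x n u
  set w' := invCocycCLM θ ψ0 x n w
  have hu'0 : u' ≠ 0 := (map_ne_zero_iff _ (invCocycCLM_injective θ ψ0 x n)).2 hu0
  have hw'0 : w' ≠ 0 := (map_ne_zero_iff _ (invCocycCLM_injective θ ψ0 x n)).2 hw0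
  have hbound := hdom _ n w' (invCocycCLM_mem hE hw n) hw'0 u' (invCocycCLM_mem hF hu n) hu'0
  have hgu : act (mat g) u' = u := act_act_inv g u
  have hgw : act (mat g) w' = w := act_act_inv g w
  rw [hgu, hgw, div_le_iff₀ (norm_pos_iff.2 hw'0)] at hbound
  have hwp := norm_pos_iff.2 hw0
  calc ‖u'‖ = ‖w‖ * ‖u'‖ / ‖w‖ := by field_simp
    _ ≤ c * Real.exp (-μ * n) * (‖u‖ / ‖u'‖) * ‖w'‖ * ‖u'‖ / ‖w‖ := by gcongr
    _ = c * ‖u‖ / ‖w‖ * Real.exp (-μ * n) * ‖w'‖ := by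
      field_simp [norm_ne_zero_iff.2 hu'0]

theorem isSlowSubspace_cocycCLM (h : IsDominatedSplitting θ ψ0 p Ef Ff) (x : X) :
    IsSlowSubspace (cocycCLM θ ψ0 x) (Ef x) :=
  isSlowSubspace_of_codisjoint (h.2.1 x).codisjoint fun _ hu _ hw hw0 =>
    h.isLittleO_cocycCLM hu hw hw0

theorem isSlowSubspace_invCocycCLM (h : IsDominatedSplitting θ ψ0 p Ef Ff) (x : X) :
    IsSlowSubspace (invCocycCLM θ ψ0 x) (Ff x) :=
  isSlowSubspace_of_codisjoint (h.2.1 x).codisjoint.symm fun _ hu _ hw hw0 =>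
    h.isLittleO_invCocycCLM hu hw hw0

variable {p' : ℕ} {Ef' Ff' : X → Submodule ℝ (Euc d)}

theorem Ef_le_of_le (h : IsDominatedSplitting θ ψ0 p Ef Ff)
    (h' : IsDominatedSplitting θ ψ0 p' Ef' Ff') (hp : p ≤ p') (x : X) : Ef' x ≤ Ef x :=
  (h'.isSlowSubspace_cocycCLM x).le_of_finrank_le (cocycCLM_injective θ ψ0 x)
    (h.isSlowSubspace_cocycCLM x) (by have := h.finrank_add x; have := h'.finrank_add x; omega)

theorem Ff_le_of_le (h : IsDominatedSplitting θ ψ0 p Ef Ff)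
    (h' : IsDominatedSplitting θ ψ0 p' Ef' Ff') (hp : p ≤ p') (x : X) : Ff x ≤ Ff' x :=
  (h.isSlowSubspace_invCocycCLM x).le_of_finrank_le (invCocycCLM_injective θ ψ0 x)
    (h'.isSlowSubspace_invCocycCLM x) (by rw [h.1 x, h'.1 x]; exact hp)

end IsDominatedSplitting

theorem stmt18_general {X : Type*} [MetricSpace X] {d : ℕ}
    (θ : X ≃ₜ X) (ψ0 : X → GL (Fin d) ℝ)
    (p₁ p₂ : ℕ) (hp : p₁ ≤ p₂)
    (E1 F1 E2 F2 : X → Submodule ℝ (Euc d))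
    (h1 : IsDominatedSplitting θ ψ0 p₁ E1 F1)
    (h2 : IsDominatedSplitting θ ψ0 p₂ E2 F2) :
    (∀ x, E2 x ≤ E1 x ∧ F1 x ≤ F2 x) ∧
    (p₁ = p₂ → ∀ x, E1 x = E2 x ∧ F1 x = F2 x) :=
  ⟨fun x => ⟨h1.Ef_le_of_le h2 hp x, h1.Ff_le_of_le h2 hp x⟩, fun hp' x =>
    ⟨le_antisymm (h2.Ef_le_of_le h1 hp'.ge x) (h1.Ef_le_of_le h2 hp x),
      le_antisymm (h1.Ff_le_of_le h2 hp x) (h2.Ff_le_of_le h1 hp'.ge x)⟩⟩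

/-- Proposition 2.2/2.5 of [CP]: compatibility and uniqueness of dominated
splittings. -/
theorem stmt18 {X : Type*} [MetricSpace X] [CompactSpace X] {d : ℕ}
    (θ : X ≃ₜ X) (ψ0 : X → GL (Fin d) ℝ) (hψ : Continuous ψ0)
    (p₁ p₂ : ℕ) (hp : p₁ ≤ p₂)
    (E1 F1 E2 F2 : X → Submodule ℝ (Euc d))
    (h1 : IsDominatedSplitting θ ψ0 p₁ E1 F1)
    (h2 : IsDominatedSplitting θ ψ0 p₂ E2 F2) :
    (∀ x, E2 x ≤ E1 x ∧ F1 x ≤ F2 x) ∧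
    (p₁ = p₂ → ∀ x, E1 x = E2 x ∧ F1 x = F2 x) :=
  stmt18_general θ ψ0 p₁ p₂ hp E1 F1 E2 F2 h1 h2

end Paper
end
end
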